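/- arXiv:2306.07544 — 3 statements merged into one kernel-verified Lean document; each statement's English description precedes it below -/
import Mathlib

section
/- For the logistic loss ℓ(z) = ln(1 + e^{−z}), the function G(p) := ℓ(0) − inf_{z∈ℝ} (p·ℓ(z) + (1−p)·ℓ(−z)) satisfies G(p) ≥ (|2p−1|/√2)² = (2p−1)²/2 for all p ∈ [0,1]. -/
noncomputable def logisticLoss (z : ℝ) : ℝ := Real.log (1 + Real.exp (-z))

lemma logisticLoss_nonneg (z : ℝ) : 0 ≤ logisticLoss z :=
  Real.log_nonneg (by nlinarith [Real.exp_pos (-z)])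

lemma logisticLoss_le (z : ℝ) : logisticLoss z ≤ Real.log 2 - z / 2 + (z / 2) ^ 2 / 2 := by
  have h1 : (1 : ℝ) + Real.exp (-z) = Real.exp (-(z/2)) * (2 * Real.cosh (z/2)) := by
    rw [Real.cosh_eq]
    have e1 : Real.exp (-(z/2)) * Real.exp (z/2) = 1 := by
      rw [← Real.exp_add]; norm_num
    have e2 : Real.exp (-(z/2)) ^ 2 = Real.exp (-z) := by
      rw [sq, ← Real.exp_add]; congr 1; ring
    linear_combination -e1 - e2
  have h2 : 2 * Real.cosh (z/2) ≤ 2 * Real.exp ((z/2)^2/2) := by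
    linarith [Real.cosh_le_exp_half_sq (z/2)]
  have h3 : (1 : ℝ) + Real.exp (-z) ≤ Real.exp (-(z/2)) * (2 * Real.exp ((z/2)^2/2)) := by
    rw [h1]
    exact mul_le_mul_of_nonneg_left h2 (Real.exp_pos _).le
  have h4 : (0:ℝ) < 1 + Real.exp (-z) := by positivity
  calc logisticLoss z ≤ Real.log (Real.exp (-(z/2)) * (2 * Real.exp ((z/2)^2/2))) :=
        Real.log_le_log h4 h3
    _ = Real.log 2 - z / 2 + (z / 2) ^ 2 / 2 := by
        rw [Real.log_mul (Real.exp_pos _).ne' (by positivity),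
          Real.log_mul (by norm_num) (Real.exp_pos _).ne', Real.log_exp, Real.log_exp]
        ring

theorem logistic_gap_lower_bound (p : ℝ) (hp : p ∈ Set.Icc (0:ℝ) 1) :
    ((2 * p - 1) ^ 2) / 2 ≤
      logisticLoss 0 - ⨅ z : ℝ, (p * logisticLoss z + (1 - p) * logisticLoss (-z)) := by
  obtain ⟨hp0, hp1⟩ := hp
  set q : ℝ := 2 * p - 1 with hq
  have hbdd : BddBelow (Set.range fun z : ℝ =>
      p * logisticLoss z + (1 - p) * logisticLoss (-z)) := by
    refine ⟨0, ?_⟩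
    rintro x ⟨z, rfl⟩
    have := logisticLoss_nonneg z
    have := logisticLoss_nonneg (-z)
    have : (0:ℝ) ≤ 1 - p := by linarith
    positivity
  have hinf : (⨅ z : ℝ, (p * logisticLoss z + (1 - p) * logisticLoss (-z)))
      ≤ p * logisticLoss (2 * q) + (1 - p) * logisticLoss (-(2 * q)) :=
    ciInf_le hbdd (2 * q)
  have hA : logisticLoss (2 * q) ≤ Real.log 2 - q + q ^ 2 / 2 := by
    have := logisticLoss_le (2 * q)
    have h : (2 * q) / 2 = q := by ring
    rw [h] at this
    linarith
  have hB : logisticLoss (-(2 * q)) ≤ Real.log 2 + q + q ^ 2 / 2 := by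
    have := logisticLoss_le (-(2 * q))
    have h : (-(2 * q)) / 2 = -q := by ring
    rw [h] at this
    have h2 : (-q : ℝ) ^ 2 = q ^ 2 := by ring
    rw [h2] at this
    linarith
  have hcomb : p * logisticLoss (2 * q) + (1 - p) * logisticLoss (-(2 * q))
      ≤ Real.log 2 - q ^ 2 / 2 := by
    have h1 : p * logisticLoss (2 * q) ≤ p * (Real.log 2 - q + q ^ 2 / 2) :=
      mul_le_mul_of_nonneg_left hA hp0
    have h2 : (1 - p) * logisticLoss (-(2 * q)) ≤ (1 - p) * (Real.log 2 + q + q ^ 2 / 2) :=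
      mul_le_mul_of_nonneg_left hB (by linarith)
    have : p * (Real.log 2 - q + q ^ 2 / 2) + (1 - p) * (Real.log 2 + q + q ^ 2 / 2)
        = Real.log 2 - q ^ 2 / 2 := by rw [hq]; ring
    linarith
  have hzero : logisticLoss 0 = Real.log 2 := by
    simp [logisticLoss]
    norm_num
  rw [hzero]
  linarith
end

section
/- Let (X, μ) be a measure space with μ a finite Borel measure, let 𝒫 be a set-valued map on X with nonempty values, and let f : X → ℝ̄ be any function. Define f⁻(x) = inf_{x'∈𝒫(x)} f(x') and f⁺(x) = sup_{x'∈𝒫(x)} f(x'). Let ℓ be a nonnegative nonincreasing convex continuously differentiable loss with ℓ(∞) = 0. Then ∫ [1[y=+1]·ℓ(f⁻(x)) + 1[y=−1]·ℓ(−f⁺(x))] dμ(x,y) = ∫_{−∞}^{∞} ∫ [1[y=+1]·1[f⁻(x)<t]·(−ℓ'(t)) + 1[y=−1]·1[f⁺(x)≥t]·(−ℓ'(−t))] dμ(x,y) dt, assuming all the indicator integrands are measurable. -/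
open MeasureTheory

/-- worst-case (adversarial) infimum of a predictor over the perturbation set -/
noncomputable def advInf {X : Type*} (P : X → Set X) (f : X → ℝ) (x : X) : ℝ :=
  sInf (f '' P x)

/-- worst-case (adversarial) supremum of a predictor over the perturbation set -/
noncomputable def advSup {X : Type*} (P : X → Set X) (f : X → ℝ) (x : X) : ℝ :=
  sSup (f '' P x)

theorem adversarial_convex_risk_eq_integral_of_reweighted_zero_one
    {X : Type*} [MeasurableSpace X]
    (μ : Measure (X × ℝ)) [IsFiniteMeasure μ]
    (P : X → Set X) (hP : ∀ x, (P x).Nonempty)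
    (f : X → ℝ)
    (ℓ : ℝ → ℝ)
    (hnonneg : ∀ z, 0 ≤ ℓ z)
    (hanti : Antitone ℓ)
    (hconv : ConvexOn ℝ Set.univ ℓ)
    (hdiff : Differentiable ℝ ℓ)
    (hderiv_cont : Continuous (deriv ℓ))
    (hlim : Filter.Tendsto ℓ Filter.atTop (nhds 0))
    (hmeas_inf : Measurable (advInf P f))
    (hmeas_sup : Measurable (advSup P f))
    (hint : Integrable (fun p : X × ℝ =>
      (if p.2 = 1 then ℓ (advInf P f p.1) else 0)
        + (if p.2 = -1 then ℓ (-(advSup P f p.1)) else 0)) μ) :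
    (∫ p : X × ℝ,
        ((if p.2 = 1 then ℓ (advInf P f p.1) else 0)
          + (if p.2 = -1 then ℓ (-(advSup P f p.1)) else 0)) ∂μ)
      = ∫ t : ℝ, (∫ p : X × ℝ,
          ((if p.2 = 1 ∧ advInf P f p.1 < t then -(deriv ℓ t) else 0)
            + (if p.2 = -1 ∧ t ≤ advSup P f p.1 then -(deriv ℓ (-t)) else 0)) ∂μ) := by
  classical
  set a := advInf P f with ha
  set b := advSup P f with hb
  -- the derivative of ℓ is nonpositive
  have hd : ∀ x : ℝ, deriv ℓ x ≤ 0 := by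
    intro x
    have h1 : Filter.Tendsto (slope ℓ x) (nhdsWithin x (Set.Ioi x)) (nhds (deriv ℓ x)) :=
      (hasDerivAt_iff_tendsto_slope.1 (hdiff x).hasDerivAt).mono_left
        (nhdsWithin_mono x (fun y hy => ne_of_gt hy))
    refine le_of_tendsto h1 ?_
    filter_upwards [self_mem_nhdsWithin] with y hy
    have hle : ℓ y ≤ ℓ x := hanti (le_of_lt hy)
    rw [slope_def_field]
    exact div_nonpos_of_nonpos_of_nonneg (by linarith) (by linarith [Set.mem_Ioi.1 hy])
  -- key integral identities
  have hInt1 : ∀ c : ℝ, IntegrableOn (fun t => -(deriv ℓ t)) (Set.Ioi c) := by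
    intro c
    exact integrableOn_Ioi_deriv_of_nonneg' (g := fun y => -ℓ y) (l := 0)
      (fun x _ => ((hdiff x).hasDerivAt).neg)
      (fun x _ => neg_nonneg.2 (hd x)) (by simpa using hlim.neg)
  have hkey1 : ∀ c : ℝ, ∫ t in Set.Ioi c, -(deriv ℓ t) = ℓ c := by
    intro c
    have := integral_Ioi_of_hasDerivAt_of_nonneg' (g := fun y => -ℓ y)
      (g' := fun t => -(deriv ℓ t)) (a := c) (l := 0)
      (fun x _ => ((hdiff x).hasDerivAt).neg)
      (fun x _ => neg_nonneg.2 (hd x)) (by simpa using hlim.neg)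
    simpa using this
  have hInt2 : ∀ c : ℝ, IntegrableOn (fun t => -(deriv ℓ (-t))) (Set.Iic c) := by
    intro c
    have h := (MeasurePreserving.integrableOn_comp_preimage
      (Measure.measurePreserving_neg (volume : Measure ℝ))
      (Homeomorph.neg ℝ).measurableEmbedding).2 (hInt1 (-c))
    have hpre : (fun x : ℝ => -x) ⁻¹' Set.Ioi (-c) = Set.Iio c := by
      ext x; simp
    rw [hpre] at h
    rw [integrableOn_Iic_iff_integrableOn_Iio]
    exact h
  have hkey2 : ∀ c : ℝ, ∫ t in Set.Iic c, -(deriv ℓ (-t)) = ℓ (-c) := by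
    intro c
    rw [integral_comp_neg_Iic c (fun s => -(deriv ℓ s))]
    exact hkey1 (-c)
  -- abbreviations
  set F : X × ℝ → ℝ := fun p =>
    (if p.2 = 1 then ℓ (a p.1) else 0) + (if p.2 = -1 then ℓ (-(b p.1)) else 0) with hF
  set g : ℝ → X × ℝ → ℝ := fun t p =>
    (if p.2 = 1 ∧ a p.1 < t then -(deriv ℓ t) else 0)
      + (if p.2 = -1 ∧ t ≤ b p.1 then -(deriv ℓ (-t)) else 0) with hg
  have hFnn : ∀ p, 0 ≤ F p := by
    intro p
    apply add_nonneg <;> split <;> simp [hnonneg]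
  have hgnn : ∀ t p, 0 ≤ g t p := by
    intro t p
    apply add_nonneg <;> split <;>
      simp [neg_nonneg, hd]
  -- measurable sets
  have hS1 : ∀ t : ℝ, MeasurableSet {p : X × ℝ | p.2 = 1 ∧ a p.1 < t} := by
    intro t
    exact (measurable_snd (measurableSet_singleton 1)).inter
      ((hmeas_inf.comp measurable_fst) measurableSet_Iio)
  have hS2 : ∀ t : ℝ, MeasurableSet {p : X × ℝ | p.2 = -1 ∧ t ≤ b p.1} := by
    intro t
    exact (measurable_snd (measurableSet_singleton (-1))).inter
      ((hmeas_sup.comp measurable_fst) measurableSet_Ici)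
  have hgmeas : ∀ t : ℝ, Measurable (g t) := by
    intro t
    exact (Measurable.ite (hS1 t) measurable_const measurable_const).add
      (Measurable.ite (hS2 t) measurable_const measurable_const)
  -- global measurability on the product
  have hT1 : MeasurableSet {q : ℝ × (X × ℝ) | q.2.2 = 1 ∧ a q.2.1 < q.1} := by
    have h1 : MeasurableSet {q : ℝ × (X × ℝ) | q.2.2 = 1} :=
      (measurable_snd.snd) (measurableSet_singleton 1)
    have h2 : MeasurableSet {q : ℝ × (X × ℝ) | a q.2.1 < q.1} :=
      measurableSet_lt (hmeas_inf.comp measurable_snd.fst) measurable_fst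
    exact h1.inter h2
  have hT2 : MeasurableSet {q : ℝ × (X × ℝ) | q.2.2 = -1 ∧ q.1 ≤ b q.2.1} := by
    have h1 : MeasurableSet {q : ℝ × (X × ℝ) | q.2.2 = -1} :=
      (measurable_snd.snd) (measurableSet_singleton (-1))
    have h2 : MeasurableSet {q : ℝ × (X × ℝ) | q.1 ≤ b q.2.1} :=
      measurableSet_le measurable_fst (hmeas_sup.comp measurable_snd.fst)
    exact h1.inter h2
  have hguncurry : Measurable (fun q : ℝ × (X × ℝ) => g q.1 q.2) := by
    apply Measurable.add
    · exact Measurable.ite hT1 ((hderiv_cont.measurable.comp measurable_fst).neg)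
        measurable_const
    · exact Measurable.ite hT2
        ((hderiv_cont.measurable.comp measurable_fst.neg).neg) measurable_const
  have hGmeas : Measurable (fun t : ℝ => ∫⁻ p, ENNReal.ofReal (g t p) ∂μ) := by
    exact Measurable.lintegral_prod_right (f := fun t p => ENNReal.ofReal (g t p))
      hguncurry.ennreal_ofReal
  -- pointwise inner integral
  have hpoint : ∀ p : X × ℝ, (∫⁻ t, ENNReal.ofReal (g t p)) = ENNReal.ofReal (F p) := by
    intro p
    have hsplit : ∀ t, ENNReal.ofReal (g t p)
        = ENNReal.ofReal (if p.2 = 1 ∧ a p.1 < t then -(deriv ℓ t) else 0)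
          + ENNReal.ofReal (if p.2 = -1 ∧ t ≤ b p.1 then -(deriv ℓ (-t)) else 0) := by
      intro t
      have hA : (0:ℝ) ≤ (if p.2 = 1 ∧ a p.1 < t then -(deriv ℓ t) else 0) := by
        split <;> simp [neg_nonneg, hd]
      have hB : (0:ℝ) ≤ (if p.2 = -1 ∧ t ≤ b p.1 then -(deriv ℓ (-t)) else 0) := by
        split <;> simp [neg_nonneg, hd]
      rw [← ENNReal.ofReal_add hA hB]
    rw [funext hsplit, lintegral_add_left]
    · have e1 : (∫⁻ t, ENNReal.ofReal (if p.2 = 1 ∧ a p.1 < t then -(deriv ℓ t) else 0))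
          = ENNReal.ofReal (if p.2 = 1 then ℓ (a p.1) else 0) := by
        by_cases h1 : p.2 = 1
        · simp only [h1, true_and, if_true]
          have hind : (fun t => ENNReal.ofReal (if a p.1 < t then -(deriv ℓ t) else 0))
              = (Set.Ioi (a p.1)).indicator (fun t => ENNReal.ofReal (-(deriv ℓ t))) := by
            ext t
            by_cases ht : a p.1 < t <;> simp [Set.indicator, ht]
          rw [hind, lintegral_indicator measurableSet_Ioi,
            ← ofReal_integral_eq_lintegral_ofReal (hInt1 (a p.1))
              (Filter.Eventually.of_forall fun t => neg_nonneg.2 (hd t)), hkey1]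
        · simp [h1]
      have e2 : (∫⁻ t, ENNReal.ofReal (if p.2 = -1 ∧ t ≤ b p.1 then -(deriv ℓ (-t)) else 0))
          = ENNReal.ofReal (if p.2 = -1 then ℓ (-(b p.1)) else 0) := by
        by_cases h2 : p.2 = -1
        · simp only [h2, true_and, if_true]
          have hind : (fun t => ENNReal.ofReal (if t ≤ b p.1 then -(deriv ℓ (-t)) else 0))
              = (Set.Iic (b p.1)).indicator (fun t => ENNReal.ofReal (-(deriv ℓ (-t)))) := by
            ext t
            by_cases ht : t ≤ b p.1 <;> simp [Set.indicator, ht]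
          rw [hind, lintegral_indicator measurableSet_Iic,
            ← ofReal_integral_eq_lintegral_ofReal (hInt2 (b p.1))
              (Filter.Eventually.of_forall fun t => neg_nonneg.2 (hd (-t))), hkey2]
        · simp [h2]
      rw [e1, e2, hF]
      rw [ENNReal.ofReal_add]
      · split <;> simp [hnonneg]
      · split <;> simp [hnonneg]
    · have hS1' : MeasurableSet {t : ℝ | p.2 = 1 ∧ a p.1 < t} := by
        by_cases h : p.2 = 1
        · simp only [h, true_and]; exact measurableSet_Ioi
        · simp [h]
      exact (Measurable.ite hS1' hderiv_cont.neg.measurable measurable_const).ennreal_ofReal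
  -- finiteness
  have hΦ : (∫⁻ p, ENNReal.ofReal (F p) ∂μ) ≠ ⊤ := by
    refine ne_of_lt (lt_of_le_of_lt (lintegral_ofReal_le_lintegral_enorm F) ?_)
    exact hint.2
  have hswap : (∫⁻ t, ∫⁻ p, ENNReal.ofReal (g t p) ∂μ) = ∫⁻ p, ENNReal.ofReal (F p) ∂μ := by
    rw [lintegral_lintegral_swap (hguncurry.ennreal_ofReal.aemeasurable)]
    exact lintegral_congr hpoint
  have hae : ∀ᵐ t : ℝ, (∫⁻ p, ENNReal.ofReal (g t p) ∂μ) < ⊤ :=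
    ae_lt_top hGmeas (by rw [hswap]; exact hΦ)
  have hmain : (∫ t : ℝ, ∫ p : X × ℝ, g t p ∂μ)
      = (∫⁻ p, ENNReal.ofReal (F p) ∂μ).toReal := by
    calc (∫ t : ℝ, ∫ p : X × ℝ, g t p ∂μ)
        = ∫ t : ℝ, (∫⁻ p, ENNReal.ofReal (g t p) ∂μ).toReal := by
          refine integral_congr_ae (Filter.Eventually.of_forall fun t => ?_)
          exact integral_eq_lintegral_of_nonneg_ae
            (Filter.Eventually.of_forall (hgnn t)) (hgmeas t).aestronglyMeasurable
      _ = (∫⁻ t : ℝ, ∫⁻ p, ENNReal.ofReal (g t p) ∂μ).toReal :=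
          integral_toReal hGmeas.aemeasurable hae
      _ = (∫⁻ p, ENNReal.ofReal (F p) ∂μ).toReal := by rw [hswap]
  exact (integral_eq_lintegral_of_nonneg_ae
    (Filter.Eventually.of_forall hFnn) hint.aestronglyMeasurable).trans hmain.symm
end

section
/- Let μ be a finite measure, 𝒫 a perturbation map, and ℓ a convex loss with continuous derivative. Suppose for each r ∈ ℝ, f_r is a measurable {−1,+1}-valued predictor minimizing the reweighted adversarial zero-one risk ℛ_AZ^r. Then the function r ↦ ℛ_AZ^r(f_r) is continuous, i.e., for any t, lim_{s→t} ℛ_AZ^s(f_s) = ℛ_AZ^t(f_t). -/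
open MeasureTheory Filter

/-- adversarial zero-one risk with `+1` labels weighted `-ℓ'(s)` and `-1` labels
weighted `-ℓ'(-s)` -/
noncomputable def RAZ {X : Type*} [MeasurableSpace X]
    (μ : Measure (X × ℝ)) (P : X → Set X) (ℓ : ℝ → ℝ) (s : ℝ) (g : X → ℝ) : ℝ :=
  ∫ p : X × ℝ,
    ((if p.2 = 1 ∧ advInf P g p.1 < 0 then -(deriv ℓ s) else 0)
      + (if p.2 = -1 ∧ 0 ≤ advSup P g p.1 then -(deriv ℓ (-s)) else 0)) ∂μ

lemma RAZ_eq {X : Type*} [MeasurableSpace X]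
    (μ : Measure (X × ℝ)) [IsFiniteMeasure μ]
    (P : X → Set X) (ℓ : ℝ → ℝ) (s : ℝ) (g : X → ℝ)
    (h1 : Measurable (advInf P g)) (h2 : Measurable (advSup P g)) :
    RAZ μ P ℓ s g =
      (μ {p : X × ℝ | p.2 = 1 ∧ advInf P g p.1 < 0}).toReal * (-(deriv ℓ s))
      + (μ {p : X × ℝ | p.2 = -1 ∧ 0 ≤ advSup P g p.1}).toReal * (-(deriv ℓ (-s))) := by
  have hs1 : MeasurableSet {p : X × ℝ | p.2 = 1 ∧ advInf P g p.1 < 0} := by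
    have : {p : X × ℝ | p.2 = 1 ∧ advInf P g p.1 < 0}
        = (Prod.snd ⁻¹' {(1:ℝ)}) ∩ ((fun p : X × ℝ => advInf P g p.1) ⁻¹' Set.Iio 0) := by
      ext p; simp [Set.mem_setOf_eq]
    rw [this]
    exact (measurable_snd (measurableSet_singleton 1)).inter
      ((h1.comp measurable_fst) measurableSet_Iio)
  have hs2 : MeasurableSet {p : X × ℝ | p.2 = -1 ∧ 0 ≤ advSup P g p.1} := by
    have : {p : X × ℝ | p.2 = -1 ∧ 0 ≤ advSup P g p.1}
        = (Prod.snd ⁻¹' {(-1:ℝ)}) ∩ ((fun p : X × ℝ => advSup P g p.1) ⁻¹' Set.Ici 0) := by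
      ext p; simp [Set.mem_setOf_eq]
    rw [this]
    exact (measurable_snd (measurableSet_singleton (-1))).inter
      ((h2.comp measurable_fst) measurableSet_Ici)
  have e1 : ∀ p : X × ℝ,
      (if p.2 = 1 ∧ advInf P g p.1 < 0 then -(deriv ℓ s) else 0)
        = Set.indicator {p : X × ℝ | p.2 = 1 ∧ advInf P g p.1 < 0}
            (fun _ => -(deriv ℓ s)) p := by
    intro p; rw [Set.indicator_apply]; rfl
  have e2 : ∀ p : X × ℝ,
      (if p.2 = -1 ∧ 0 ≤ advSup P g p.1 then -(deriv ℓ (-s)) else 0)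
        = Set.indicator {p : X × ℝ | p.2 = -1 ∧ 0 ≤ advSup P g p.1}
            (fun _ => -(deriv ℓ (-s))) p := by
    intro p; rw [Set.indicator_apply]; rfl
  unfold RAZ
  simp_rw [e1, e2]
  rw [integral_add ((integrable_const _).indicator hs1) ((integrable_const _).indicator hs2),
    integral_indicator_const _ hs1, integral_indicator_const _ hs2]
  simp [smul_eq_mul, Measure.real]

lemma RAZ_diff_bound {X : Type*} [MeasurableSpace X]
    (μ : Measure (X × ℝ)) [IsFiniteMeasure μ]
    (P : X → Set X) (ℓ : ℝ → ℝ) (s t : ℝ) (g : X → ℝ)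
    (h1 : Measurable (advInf P g)) (h2 : Measurable (advSup P g)) :
    |RAZ μ P ℓ s g - RAZ μ P ℓ t g| ≤
      (μ Set.univ).toReal * (|deriv ℓ s - deriv ℓ t| + |deriv ℓ (-s) - deriv ℓ (-t)|) := by
  rw [RAZ_eq μ P ℓ s g h1 h2, RAZ_eq μ P ℓ t g h1 h2]
  set A := (μ {p : X × ℝ | p.2 = 1 ∧ advInf P g p.1 < 0}).toReal with hA
  set B := (μ {p : X × ℝ | p.2 = -1 ∧ 0 ≤ advSup P g p.1}).toReal with hB
  set C := (μ Set.univ).toReal with hC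
  have hA0 : 0 ≤ A := ENNReal.toReal_nonneg
  have hB0 : 0 ≤ B := ENNReal.toReal_nonneg
  have hAC : A ≤ C := ENNReal.toReal_mono (measure_ne_top _ _) (measure_mono (Set.subset_univ _))
  have hBC : B ≤ C := ENNReal.toReal_mono (measure_ne_top _ _) (measure_mono (Set.subset_univ _))
  have : A * -deriv ℓ s + B * -deriv ℓ (-s) - (A * -deriv ℓ t + B * -deriv ℓ (-t))
      = A * (deriv ℓ t - deriv ℓ s) + B * (deriv ℓ (-t) - deriv ℓ (-s)) := by ring
  rw [this]
  calc |A * (deriv ℓ t - deriv ℓ s) + B * (deriv ℓ (-t) - deriv ℓ (-s))|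
      ≤ |A * (deriv ℓ t - deriv ℓ s)| + |B * (deriv ℓ (-t) - deriv ℓ (-s))| := abs_add_le _ _
    _ = A * |deriv ℓ t - deriv ℓ s| + B * |deriv ℓ (-t) - deriv ℓ (-s)| := by
        rw [abs_mul, abs_mul, abs_of_nonneg hA0, abs_of_nonneg hB0]
    _ ≤ C * |deriv ℓ t - deriv ℓ s| + C * |deriv ℓ (-t) - deriv ℓ (-s)| := by
        gcongr
    _ = C * (|deriv ℓ s - deriv ℓ t| + |deriv ℓ (-s) - deriv ℓ (-t)|) := by
        rw [abs_sub_comm (deriv ℓ t), abs_sub_comm (deriv ℓ (-t))]; ring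

theorem optimal_reweighted_risk_continuous
    {X : Type*} [MeasurableSpace X]
    (μ : Measure (X × ℝ)) [IsFiniteMeasure μ]
    (P : X → Set X) (hP : ∀ x, (P x).Nonempty)
    (ℓ : ℝ → ℝ)
    (hconv : ConvexOn ℝ Set.univ ℓ)
    (hdiff : Differentiable ℝ ℓ)
    (hderiv_cont : Continuous (deriv ℓ))
    (f : ℝ → X → ℝ)
    (hf : ∀ r x, f r x = 1 ∨ f r x = -1)
    (hf_meas : ∀ r, Measurable (fun x => f r x))
    (hf_meas_inf : ∀ r, Measurable (advInf P (f r)))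
    (hf_meas_sup : ∀ r, Measurable (advSup P (f r)))
    (hmin : ∀ r (h : X → ℝ), (∀ x, h x = 1 ∨ h x = -1) → Measurable h →
      Measurable (advInf P h) → Measurable (advSup P h) →
      RAZ μ P ℓ r (f r) ≤ RAZ μ P ℓ r h)
    (t : ℝ) :
    Tendsto (fun s => RAZ μ P ℓ s (f s)) (nhds t) (nhds (RAZ μ P ℓ t (f t))) := by
  set F : ℝ → ℝ := fun s => RAZ μ P ℓ s (f s) with hF
  set G : ℝ → ℝ := fun s =>
    (μ Set.univ).toReal * (|deriv ℓ s - deriv ℓ t| + |deriv ℓ (-s) - deriv ℓ (-t)|) with hG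
  have key : ∀ s, |F s - F t| ≤ G s := by
    intro s
    have hFs : F s = RAZ μ P ℓ s (f s) := rfl
    have hFt : F t = RAZ μ P ℓ t (f t) := rfl
    have hGs : G s = (μ Set.univ).toReal *
        (|deriv ℓ s - deriv ℓ t| + |deriv ℓ (-s) - deriv ℓ (-t)|) := rfl
    rw [abs_sub_le_iff, hFs, hFt, hGs]
    constructor
    · have h1 : F s ≤ RAZ μ P ℓ s (f t) :=
        hmin s (f t) (hf t) (hf_meas t) (hf_meas_inf t) (hf_meas_sup t)
      have h2 := RAZ_diff_bound μ P ℓ s t (f t) (hf_meas_inf t) (hf_meas_sup t)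
      have := abs_le.1 h2
      linarith [this.2]
    · have h1 : F t ≤ RAZ μ P ℓ t (f s) :=
        hmin t (f s) (hf s) (hf_meas s) (hf_meas_inf s) (hf_meas_sup s)
      have h2 := RAZ_diff_bound μ P ℓ s t (f s) (hf_meas_inf s) (hf_meas_sup s)
      have := abs_le.1 h2
      linarith [this.1]
  have hGt : Tendsto G (nhds t) (nhds 0) := by
    have : Tendsto G (nhds t) (nhds ((μ Set.univ).toReal *
        (|deriv ℓ t - deriv ℓ t| + |deriv ℓ (-t) - deriv ℓ (-t)|))) := by
      apply Tendsto.const_mul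
      exact ((((hderiv_cont.tendsto t).sub tendsto_const_nhds).abs).add
        ((((hderiv_cont.comp (continuous_neg)).tendsto t).sub tendsto_const_nhds).abs))
    simpa using this
  rw [tendsto_iff_norm_sub_tendsto_zero]
  exact squeeze_zero (fun s => norm_nonneg _) (fun s => key s) hGt
end
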